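/- Fix τ ∈ ℍ with E4(τ) ≠ 0 and regard A₂ = Δ·K²/(4E4) − E6·L/24 + E4·M/24, B₁ = Δ·K/E4, B₂ = −E6·Δ·K²/(24E4²) − E4²·L/288 + E6·M/288, B₃ = −Δ²·K³/E4³ + Δ·K·M/(4E4) + Δ·N/4 as elements of the polynomial ring ℂ[K,L,M,N] in four formal variables K, L, M, N (with Δ = Δ(τ), E4 = E4(τ), E6 = E6(τ)). Then the determinant of the 4×4 Jacobian matrix whose (i,j) entry is the formal partial derivative of the i-th polynomial among (A₂,B₁,B₂,B₃) with respect to the j-th variable among (K,L,M,N) is the constant polynomial −Δ(τ)³/(16·E4(τ)). -/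

import Mathlib

/-!
Expanding the Jacobian determinant along the `B₁` row and then along the `N` column leaves
`−(Δ/E4)·(Δ/4)` times the `(L, M)`-minor of `(A₂, B₂)`, which is
`(E4³ − E6²)/6912 = Δ/4` by the definition of `Δ`.
-/

open MvPolynomial Complex

/-- `q = e^{2πiτ}` -/
noncomputable def qc (τ : ℂ) : ℂ := Complex.exp (2 * Real.pi * Complex.I * τ)

/-- `E4(τ) = 1 + 240·Σ_{n≥1} n³qⁿ/(1−qⁿ)` -/
noncomputable def E4 (τ : ℂ) : ℂ :=
  1 + 240 * ∑' n : ℕ, ((n : ℂ) + 1) ^ 3 * qc τ ^ (n + 1) / (1 - qc τ ^ (n + 1))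

/-- `E6(τ) = 1 − 504·Σ_{n≥1} n⁵qⁿ/(1−qⁿ)` -/
noncomputable def E6 (τ : ℂ) : ℂ :=
  1 - 504 * ∑' n : ℕ, ((n : ℂ) + 1) ^ 5 * qc τ ^ (n + 1) / (1 - qc τ ^ (n + 1))

/-- `Δ = (E4³ − E6²)/1728` -/
noncomputable def Δf (τ : ℂ) : ℂ := (E4 τ ^ 3 - E6 τ ^ 2) / 1728

/-- `A₂ = Δ·K²/(4E4) − E6·L/24 + E4·M/24` in `ℂ[K,L,M,N]`, variables `X 0 = K, X 1 = L,
X 2 = M, X 3 = N`. -/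
noncomputable def A2p (τ : ℂ) : MvPolynomial (Fin 4) ℂ :=
  C (Δf τ / (4 * E4 τ)) * X 0 ^ 2 - C (E6 τ / 24) * X 1 + C (E4 τ / 24) * X 2

/-- `B₁ = Δ·K/E4` -/
noncomputable def B1p (τ : ℂ) : MvPolynomial (Fin 4) ℂ := C (Δf τ / E4 τ) * X 0

/-- `B₂ = −E6·Δ·K²/(24E4²) − E4²·L/288 + E6·M/288` -/
noncomputable def B2p (τ : ℂ) : MvPolynomial (Fin 4) ℂ :=
  -(C (E6 τ * Δf τ / (24 * E4 τ ^ 2))) * X 0 ^ 2 - C (E4 τ ^ 2 / 288) * X 1 +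
    C (E6 τ / 288) * X 2

/-- `B₃ = −Δ²·K³/E4³ + Δ·K·M/(4E4) + Δ·N/4` -/
noncomputable def B3p (τ : ℂ) : MvPolynomial (Fin 4) ℂ :=
  -(C (Δf τ ^ 2 / E4 τ ^ 3)) * X 0 ^ 3 + C (Δf τ / (4 * E4 τ)) * (X 0 * X 2) +
    C (Δf τ / 4) * X 3

theorem Matrix.det_fin_four_of_sparse {R : Type*} [CommRing R] (a b c d e f g x y z : R) :
    Matrix.det !![x, b, c, 0; a, 0, 0, 0; y, e, f, 0; z, 0, g, d] = -(a * d * (b * f - c * e)) := by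
  simp [Matrix.det_succ_row_zero, Fin.sum_univ_succ, Fin.succAbove]
  ring

theorem jacobian_A2p_B1p_B2p_B3p (τ : ℂ) :
    (Matrix.of fun i j : Fin 4 => pderiv j (![A2p τ, B1p τ, B2p τ, B3p τ] i)) =
      !![C (Δf τ / (4 * E4 τ)) * (2 * X 0), -C (E6 τ / 24), C (E4 τ / 24), 0;
        C (Δf τ / E4 τ), 0, 0, 0;
        -(C (E6 τ * Δf τ / (24 * E4 τ ^ 2)) * (2 * X 0)), -C (E4 τ ^ 2 / 288), C (E6 τ / 288), 0;
        -(C (Δf τ ^ 2 / E4 τ ^ 3) * (3 * X 0 ^ 2)) + C (Δf τ / (4 * E4 τ)) * X 2, 0,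
          C (Δf τ / (4 * E4 τ)) * X 0, C (Δf τ / 4)] := by
  ext i j : 1
  fin_cases i <;> fin_cases j <;>
    simp [A2p, B1p, B2p, B3p, pderiv_X]

theorem stmt_8_general (τ : ℂ) :
    (Matrix.of fun i j : Fin 4 => MvPolynomial.pderiv j (![A2p τ, B1p τ, B2p τ, B3p τ] i)).det
      = C (-(Δf τ ^ 3) / (16 * E4 τ)) := by
  have minor_LM : -(E6 τ / 24) * (E6 τ / 288) - E4 τ / 24 * -(E4 τ ^ 2 / 288) = Δf τ / 4 := by
    rw [Δf]; ring
  rw [jacobian_A2p_B1p_B2p_B3p, Matrix.det_fin_four_of_sparse]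
  simp only [← map_neg, ← map_mul, ← map_sub, minor_LM]
  congr 1
  ring

/-- The formal Jacobian determinant of `(A₂,B₁,B₂,B₃)` w.r.t. `(K,L,M,N)` is the constant
polynomial `−Δ(τ)³/(16·E4(τ))`. -/
theorem stmt_8 (τ : ℂ) (hτ : 0 < τ.im) (hE4 : E4 τ ≠ 0) :
    (Matrix.of fun i j : Fin 4 => MvPolynomial.pderiv j (![A2p τ, B1p τ, B2p τ, B3p τ] i)).det
      = C (-(Δf τ ^ 3) / (16 * E4 τ)) :=
  stmt_8_general τ
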